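/- Let V: ℝ → [0,∞) be an Orlicz function. Define for α ∈ (-∞,0) the mean M(α) := (∫_ℝ V(x) e^{αV(x)} dx) / (∫_ℝ e^{αV(x)} dx). Then M(α) → ∞ as α → 0⁻ and M(α) → 0 as α → -∞. -/

import Mathlib

open MeasureTheory Real Filter Topology ENNReal

noncomputable section

/-- An Orlicz function: convex, symmetric, vanishing only at `0`, nonnegative. -/
def IsOrlicz (V : ℝ → ℝ) : Prop :=
  ConvexOn ℝ Set.univ V ∧ (∀ x, V (-x) = V x) ∧ V 0 = 0 ∧ (∀ x, x ≠ 0 → 0 < V x) ∧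
    (∀ x, 0 ≤ V x)

/-!
Write `Z(α) = ∫ exp (α V)` and `N(α) = ∫ V exp (α V)`; since a convex `V` with `V 1 > 0` grows at
least linearly, both are finite for `α < 0`.

As `α → 0⁻`, `Z(α) → ∞` because `V` is bounded on every interval, while `{V < K}` has finite
measure `C_K`. The pointwise bound `K (exp (α V) - 1_{V < K}) ≤ V exp (α V)` gives
`N ≥ K (Z - C_K)`, so `N / Z ≥ K / 2` once `Z ≥ 2 C_K`.

As `α → -∞`, splitting at `V = ε` gives `N(α) ≤ ε Z(α) + exp ((α + 1) ε) N(-1)`, while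
`Z(α) ≥ exp (α ε / 2) |{V ≤ ε / 2}|` and `|{V ≤ ε / 2}| > 0` by continuity of `V` at `0`.
Hence `N / Z ≤ ε + O(exp (α ε / 2))`.
-/

lemma integrable_exp_mul_abs {a : ℝ} (ha : a < 0) : Integrable fun x : ℝ => exp (a * |x|) := by
  rw [← integrableOn_univ, ← Set.Iic_union_Ioi (a := (0 : ℝ)), integrableOn_union]
  constructor
  · refine (integrableOn_exp_mul_Iic (neg_pos.2 ha) 0).congr_fun (fun x hx => ?_) measurableSet_Iic
    simp only [abs_of_nonpos (Set.mem_Iic.1 hx), mul_neg, neg_mul]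
  · refine (integrableOn_exp_mul_Ioi ha 0).congr_fun (fun x hx => ?_) measurableSet_Ioi
    rw [abs_of_pos hx]

lemma mul_exp_mul_le {w ε α : ℝ} (hw : 0 ≤ w) (hε : 0 ≤ ε) (hα : α ≤ -1) :
    w * exp (α * w) ≤ ε * exp (α * w) + exp ((α + 1) * ε) * (w * exp (-w)) := by
  rcases le_or_gt w ε with hwε | hεw
  · have := mul_le_mul_of_nonneg_right hwε (exp_pos (α * w)).le
    have : 0 ≤ exp ((α + 1) * ε) * (w * exp (-w)) := by positivity
    linarith
  · have hsplit : exp (α * w) = exp (-w) * exp ((α + 1) * w) := by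
      rw [← exp_add]; ring_nf
    have hdecay : exp ((α + 1) * w) ≤ exp ((α + 1) * ε) :=
      exp_le_exp.2 (mul_le_mul_of_nonpos_left hεw.le (by linarith))
    calc w * exp (α * w) = w * exp (-w) * exp ((α + 1) * w) := by rw [hsplit, mul_assoc]
      _ ≤ w * exp (-w) * exp ((α + 1) * ε) := by gcongr
      _ ≤ _ := by rw [mul_comm]; exact le_add_of_nonneg_left (by positivity)

section GibbsMean

variable {X : Type*} [MeasurableSpace X] {μ : Measure X} {W : X → ℝ}

/-- The mean `M(α)` of `W` under the Gibbs measure `exp (α * W) • μ`, normalised to mass one. -/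
def gibbsMean (μ : Measure X) (W : X → ℝ) (α : ℝ) : ℝ :=
  (∫ x, W x * exp (α * W x) ∂μ) / ∫ x, exp (α * W x) ∂μ

lemma integrable_mul_exp_mul (hWm : Measurable W) (hW0 : ∀ x, 0 ≤ W x) {α : ℝ} (hα : α < 0)
    (hint : Integrable (fun x => exp (α / 2 * W x)) μ) :
    Integrable (fun x => W x * exp (α * W x)) μ := by
  refine (hint.const_mul (2 / -α)).mono' (by fun_prop) (ae_of_all _ fun x => ?_)
  have hx : W x * exp (α * W x) ≤ 2 / -α * exp (α / 2 * W x) := by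
    have hlin : W x ≤ 2 / -α * exp (-α / 2 * W x) := by
      rw [div_mul_eq_mul_div, le_div_iff₀ (by linarith)]
      linarith [add_one_le_exp (-α / 2 * W x)]
    have hsplit : exp (α / 2 * W x) = exp (-α / 2 * W x) * exp (α * W x) := by
      rw [← exp_add]; ring_nf
    rw [hsplit, ← mul_assoc]
    gcongr
  rwa [norm_of_nonneg (mul_nonneg (hW0 x) (exp_pos _).le)]

lemma exp_mul_mul_measureReal_le_integral {α : ℝ} (hα : α < 0)
    (hint : Integrable (fun x => exp (α * W x)) μ) (r : ℝ) :
    exp (α * r) * μ.real {x | W x ≤ r} ≤ ∫ x, exp (α * W x) ∂μ := by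
  have hset : {x | exp (α * r) ≤ exp (α * W x)} = {x | W x ≤ r} := by
    ext x
    simp only [Set.mem_ofPred_eq, exp_le_exp, mul_le_mul_left_of_neg hα]
  simpa only [hset] using
    mul_meas_ge_le_integral_of_nonneg (ae_of_all _ fun x => (exp_pos _).le) hint (exp (α * r))

lemma tendsto_integral_exp_mul_nhdsLT_zero (hint : ∀ α < 0, Integrable (fun x => exp (α * W x)) μ)
    (hunbdd : ∀ B, ∃ r, B < μ.real {x | W x ≤ r}) :
    Tendsto (fun α => ∫ x, exp (α * W x) ∂μ) (𝓝[<] 0) atTop := by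
  refine tendsto_atTop.2 fun B => ?_
  obtain ⟨r, hr⟩ := hunbdd B
  have hlim : Tendsto (fun α => exp (α * r) * μ.real {x | W x ≤ r}) (𝓝[<] 0)
      (𝓝 (μ.real {x | W x ≤ r})) := by
    simpa using ((continuous_exp.comp (continuous_id.mul continuous_const)).tendsto 0).mono_left
      nhdsWithin_le_nhds |>.mul_const (μ.real {x | W x ≤ r})
  filter_upwards [hlim.eventually_const_le hr, self_mem_nhdsWithin] with α hBα hα
  exact hBα.trans (exp_mul_mul_measureReal_le_integral hα (hint α hα) r)

lemma mul_sub_measureReal_le_integral_mul_exp (hWm : Measurable W) (hW0 : ∀ x, 0 ≤ W x)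
    {α : ℝ} (hα : α ≤ 0) (hZ : Integrable (fun x => exp (α * W x)) μ)
    (hN : Integrable (fun x => W x * exp (α * W x)) μ) {K : ℝ} (hK : 0 ≤ K)
    (hfin : μ {x | W x < K} ≠ ∞) :
    K * ((∫ x, exp (α * W x) ∂μ) - μ.real {x | W x < K}) ≤ ∫ x, W x * exp (α * W x) ∂μ := by
  set S := {x | W x < K}
  have hS : MeasurableSet S := measurableSet_lt hWm measurable_const
  have hind : Integrable (S.indicator 1) μ :=
    (integrable_indicator_iff hS).2 (integrableOn_const (C := (1 : ℝ)) hfin)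
  have hpt : ∀ x, K * (exp (α * W x) - S.indicator 1 x) ≤ W x * exp (α * W x) := by
    intro x
    by_cases hx : x ∈ S
    · have hexp : exp (α * W x) ≤ 1 :=
        exp_le_one_iff.2 (mul_nonpos_of_nonpos_of_nonneg hα (hW0 x))
      rw [Set.indicator_of_mem hx, Pi.one_apply]
      exact (mul_nonpos_of_nonneg_of_nonpos hK (by linarith)).trans (by have := hW0 x; positivity)
    · rw [Set.indicator_of_notMem hx, sub_zero]
      exact mul_le_mul_of_nonneg_right (not_lt.1 hx) (exp_pos _).le
  calc K * ((∫ x, exp (α * W x) ∂μ) - μ.real S)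
      = ∫ x, K * (exp (α * W x) - S.indicator 1 x) ∂μ := by
        rw [integral_const_mul, integral_sub hZ hind, integral_indicator_one hS]
    _ ≤ _ := integral_mono ((hZ.sub hind).const_mul K) hN hpt

theorem tendsto_gibbsMean_atTop {l : Filter ℝ} (hl : ∀ᶠ α in l, α < 0) (hWm : Measurable W)
    (hW0 : ∀ x, 0 ≤ W x) (hint : ∀ α < 0, Integrable (fun x => exp (α * W x)) μ)
    (hfin : ∀ K, μ {x | W x < K} ≠ ∞) (hZ : Tendsto (fun α => ∫ x, exp (α * W x) ∂μ) l atTop) :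
    Tendsto (gibbsMean μ W) l atTop := by
  refine tendsto_atTop.2 fun b => ?_
  set K := 2 * max b 0
  set C := μ.real {x | W x < K}
  filter_upwards [hl, hZ.eventually_ge_atTop (max (2 * C) 1)] with α hα hZα
  have hZpos : 0 < ∫ x, exp (α * W x) ∂μ := by linarith [le_max_right (2 * C) 1]
  have henergy := mul_sub_measureReal_le_integral_mul_exp hWm hW0 hα.le (hint α hα)
    (integrable_mul_exp_mul hWm hW0 hα (hint _ (by linarith))) (by positivity) (hfin K)
  rw [gibbsMean, le_div_iff₀ hZpos]
  nlinarith [mul_le_mul_of_nonneg_right (le_max_left b 0) hZpos.le,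
    mul_nonneg (le_max_right b 0) (sub_nonneg.2 ((le_max_left (2 * C) 1).trans hZα))]

lemma integral_mul_exp_mul_le (hWm : Measurable W) (hW0 : ∀ x, 0 ≤ W x)
    (hint : ∀ α < 0, Integrable (fun x => exp (α * W x)) μ) {α ε : ℝ} (hα : α ≤ -1) (hε : 0 ≤ ε) :
    ∫ x, W x * exp (α * W x) ∂μ ≤
      ε * (∫ x, exp (α * W x) ∂μ) + exp ((α + 1) * ε) * ∫ x, W x * exp (-W x) ∂μ := by
  have hα0 : α < 0 := by linarith
  have hN₁ : Integrable (fun x => W x * exp (-W x)) μ := by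
    simpa using integrable_mul_exp_mul hWm hW0 neg_one_lt_zero (hint _ (by norm_num))
  rw [← integral_const_mul, ← integral_const_mul, ← integral_add ((hint α hα0).const_mul ε)
    (hN₁.const_mul _)]
  exact integral_mono (integrable_mul_exp_mul hWm hW0 hα0 (hint _ (by linarith)))
    (((hint α hα0).const_mul ε).add (hN₁.const_mul _))
    fun x => mul_exp_mul_le (hW0 x) hε hα

lemma gibbsMean_le (hWm : Measurable W) (hW0 : ∀ x, 0 ≤ W x)
    (hint : ∀ α < 0, Integrable (fun x => exp (α * W x)) μ) {α ε : ℝ} (hα : α ≤ -1) (hε : 0 < ε)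
    (hm : 0 < μ.real {x | W x ≤ ε / 2}) :
    gibbsMean μ W α ≤ ε + exp ε * (∫ x, W x * exp (-W x) ∂μ) / μ.real {x | W x ≤ ε / 2} *
      exp (α * (ε / 2)) := by
  set m := μ.real {x | W x ≤ ε / 2}
  set N₁ := ∫ x, W x * exp (-W x) ∂μ
  have hα0 : α < 0 := by linarith
  have hZ := exp_mul_mul_measureReal_le_integral hα0 (hint α hα0) (ε / 2)
  have hZpos : 0 < ∫ x, exp (α * W x) ∂μ := lt_of_lt_of_le (by positivity) hZ
  have hN₁ : 0 ≤ N₁ := integral_nonneg fun x => mul_nonneg (hW0 x) (exp_pos _).le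
  calc gibbsMean μ W α
      ≤ (ε * (∫ x, exp (α * W x) ∂μ) + exp ((α + 1) * ε) * N₁) / ∫ x, exp (α * W x) ∂μ :=
        div_le_div_of_nonneg_right (integral_mul_exp_mul_le hWm hW0 hint hα hε.le) hZpos.le
    _ = ε + exp ((α + 1) * ε) * N₁ / ∫ x, exp (α * W x) ∂μ := by
        rw [add_div, mul_div_cancel_right₀ _ hZpos.ne']
    _ ≤ ε + exp ((α + 1) * ε) * N₁ / (exp (α * (ε / 2)) * m) := by
        gcongr
    _ = ε + exp ε * N₁ / m * exp (α * (ε / 2)) := by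
        rw [show (α + 1) * ε = ε + α * (ε / 2) + α * (ε / 2) by ring, exp_add, exp_add]
        field_simp

theorem tendsto_gibbsMean_atBot (hWm : Measurable W) (hW0 : ∀ x, 0 ≤ W x)
    (hint : ∀ α < 0, Integrable (fun x => exp (α * W x)) μ)
    (hpos : ∀ r > 0, 0 < μ.real {x | W x ≤ r}) :
    Tendsto (gibbsMean μ W) atBot (𝓝 0) := by
  refine tendsto_order.2 ⟨fun a ha => Eventually.of_forall fun α => ha.trans_le ?_, fun a ha => ?_⟩
  · exact div_nonneg (integral_nonneg fun x => mul_nonneg (hW0 x) (exp_pos _).le)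
      (integral_nonneg fun x => (exp_pos _).le)
  set c := exp (a / 2) * (∫ x, W x * exp (-W x) ∂μ) / μ.real {x | W x ≤ a / 2 / 2}
  have hdecay : Tendsto (fun α => c * exp (α * (a / 2 / 2))) atBot (𝓝 0) := by
    simpa using (tendsto_exp_atBot.comp (tendsto_id.atBot_mul_const (by positivity))).const_mul c
  filter_upwards [hdecay.eventually_lt_const (half_pos ha), eventually_le_atBot (-1)]
    with α hsmall hα
  have := gibbsMean_le hWm hW0 hint hα (half_pos ha) (hpos _ (by positivity))
  linarith

end GibbsMean

namespace IsOrlicz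

variable {V : ℝ → ℝ}

lemma nonneg (hV : IsOrlicz V) (x : ℝ) : 0 ≤ V x :=
  hV.2.2.2.2 x

lemma map_one_pos (hV : IsOrlicz V) : 0 < V 1 :=
  hV.2.2.2.1 1 one_ne_zero

lemma continuous (hV : IsOrlicz V) : Continuous V :=
  continuousOn_univ.mp (hV.1.continuousOn isOpen_univ)

lemma map_abs (hV : IsOrlicz V) (x : ℝ) : V |x| = V x := by
  rcases abs_choice x with h | h <;> simp only [h, hV.2.1]

lemma mul_abs_sub_one_le (hV : IsOrlicz V) (x : ℝ) : V 1 * (|x| - 1) ≤ V x := by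
  have habs := hV.map_abs x
  obtain ⟨hconv, -, h0, -, hnonneg⟩ := hV
  rcases le_or_gt |x| 1 with hx | hx
  · exact (mul_nonpos_of_nonneg_of_nonpos (hnonneg 1) (by linarith)).trans (hnonneg x)
  · have hslope := hconv.secant_mono (Set.mem_univ 0) (Set.mem_univ 1) (Set.mem_univ |x|)
      one_ne_zero (by positivity) hx.le
    rw [h0, sub_zero, sub_zero, sub_zero, div_one, le_div_iff₀ (by linarith), habs] at hslope
    nlinarith [hnonneg 1]

lemma le_of_abs_le (hV : IsOrlicz V) {x T : ℝ} (hx : |x| ≤ T) : V x ≤ V T := by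
  have hseg : x ∈ segment ℝ (-T) T := by
    rw [segment_eq_Icc (by linarith [abs_nonneg x])]
    exact abs_le.1 hx
  simpa [hV.2.1] using hV.1.le_on_segment (Set.mem_univ _) (Set.mem_univ _) hseg

lemma volume_setOf_le_ne_top (hV : IsOrlicz V) (r : ℝ) : volume {x | V x ≤ r} ≠ ∞ := by
  refine ((Metric.isBounded_Icc (-(r / V 1 + 1)) (r / V 1 + 1)).subset
    fun x hx => ?_).measure_lt_top.ne
  have hgrowth := hV.mul_abs_sub_one_le x
  have hxr : V x ≤ r := hx
  have : |x| ≤ r / V 1 + 1 := by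
    rw [← sub_le_iff_le_add, le_div_iff₀ hV.map_one_pos, mul_comm]
    linarith
  exact abs_le.1 this

lemma volume_real_setOf_le_pos (hV : IsOrlicz V) {r : ℝ} (hr : 0 < r) :
    0 < volume.real {x | V x ≤ r} := by
  have hopen : IsOpen {x | V x < r} := isOpen_lt hV.continuous continuous_const
  have hpos := hopen.measure_pos volume ⟨0, by simp [hV.2.2.1, hr]⟩
  have hsub : {x | V x < r} ⊆ {x | V x ≤ r} := Set.ofPred_subset_ofPred.2 fun _ => le_of_lt
  rw [measureReal_def]
  exact ENNReal.toReal_pos (hpos.trans_le (measure_mono hsub)).ne' (hV.volume_setOf_le_ne_top r)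

lemma exists_lt_volume_real_setOf_le (hV : IsOrlicz V) (B : ℝ) :
    ∃ r, B < volume.real {x | V x ≤ r} := by
  set T := |B| + 1
  have hT0 : 0 < T := by positivity
  refine ⟨V T, ?_⟩
  have hsub : Set.Icc (-T) T ⊆ {x | V x ≤ V T} := fun x hx => hV.le_of_abs_le (abs_le.2 hx)
  calc B < T - -T := by linarith [le_abs_self B]
    _ = volume.real (Set.Icc (-T) T) := by rw [Real.volume_real_Icc_of_le (by linarith)]
    _ ≤ _ := measureReal_mono hsub (hV.volume_setOf_le_ne_top _)

lemma integrable_exp_mul (hV : IsOrlicz V) {α : ℝ} (hα : α < 0) :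
    Integrable fun x => exp (α * V x) := by
  refine ((integrable_exp_mul_abs (mul_neg_of_neg_of_pos hα hV.map_one_pos)).const_mul
    (exp (-(α * V 1)))).mono' (by have := hV.continuous; fun_prop) (ae_of_all _ fun x => ?_)
  rw [norm_of_nonneg (exp_pos _).le, ← exp_add]
  have := mul_le_mul_of_nonpos_left (hV.mul_abs_sub_one_le x) hα.le
  exact exp_le_exp.2 (by linarith)

end IsOrlicz

/-- The Gibbs mean `M(α) = ∫ V e^{αV} / ∫ e^{αV}` tends to `∞` as `α → 0⁻`
and to `0` as `α → -∞`. -/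
theorem stmt2 (V : ℝ → ℝ) (hV : IsOrlicz V) :
    Tendsto (fun α : ℝ =>
        (∫ x : ℝ, V x * Real.exp (α * V x)) / ∫ x : ℝ, Real.exp (α * V x))
      (nhdsWithin 0 (Set.Iio (0 : ℝ))) atTop ∧
    Tendsto (fun α : ℝ =>
        (∫ x : ℝ, V x * Real.exp (α * V x)) / ∫ x : ℝ, Real.exp (α * V x))
      atBot (nhds 0) := by
  have hVm := hV.continuous.measurable
  have hint := fun α (hα : α < 0) => hV.integrable_exp_mul hα
  have hfin (K : ℝ) : volume {x | V x < K} ≠ ∞ :=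
    ne_top_of_le_ne_top (hV.volume_setOf_le_ne_top K)
      (measure_mono (Set.ofPred_subset_ofPred.2 fun _ => le_of_lt))
  exact ⟨tendsto_gibbsMean_atTop self_mem_nhdsWithin hVm hV.nonneg hint hfin
      (tendsto_integral_exp_mul_nhdsLT_zero hint hV.exists_lt_volume_real_setOf_le),
    tendsto_gibbsMean_atBot hVm hV.nonneg hint fun _ => hV.volume_real_setOf_le_pos⟩

end
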